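/- arXiv:2011.15056 — 4 statements merged into one kernel-verified Lean document; each statement's English description precedes it below -/
import Mathlib

section
/- Let X be a type equipped with two binary operations ∘ : X × X → X and ▷ : X × X → X such that for every a ∈ X the map z ↦ z ∘ a is a bijection of X (with inverse denoted z ↦ z • a), and for every g ∈ X the map z ↦ g ▷ z is a bijection of X (with inverse denoted z ↦ g ◁ z). Let D ≥ 1, let g_2, …, g_D be functions where g_d maps X^{d-1} → X, and let f_1, …, f_D be functions where f_d maps X^{d-1} × X^{D-d} → X. Then the transformation F : X^D → X^D defined recursively by y_1 = x_1 ∘ f_1(∅, x_{2:D}) and, for 2 ≤ d ≤ D, y_d = (g_d(y_{1:d-1}) ▷ x_d) ∘ f_d(y_{1:d-1}, x_{d+1:D}), is a bijection of X^D. -/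
noncomputable def Gaux {X : Type*} (op tri : X → X → X)
    (hop : ∀ a : X, Function.Bijective (fun z => op z a))
    (htri : ∀ g : X, Function.Bijective (fun z => tri g z))
    (D : ℕ)
    (g : (d : Fin D) → ((i : Fin D) → i < d → X) → X)
    (f : (d : Fin D) → ((i : Fin D) → i < d → X) → ((i : Fin D) → d < i → X) → X)
    (y : Fin D → X) (d : Fin D) : X :=
  if h0 : d.val = 0 then
    (Equiv.ofBijective _
      (hop (f d (fun i _ => y i) (fun i hi => Gaux op tri hop htri D g f y i)))).symm (y d)
  else
    (Equiv.ofBijective _ (htri (g d (fun i _ => y i)))).symm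
      ((Equiv.ofBijective _
        (hop (f d (fun i _ => y i) (fun i hi => Gaux op tri hop htri D g f y i)))).symm (y d))
termination_by D - d.val
decreasing_by all_goals exact Nat.sub_lt_sub_left d.isLt hi

/-- **General invertible transformation** (Proposition 1). -/
theorem general_invertible_transformation_bijective
    {X : Type*} (op tri : X → X → X)
    (hop : ∀ a : X, Function.Bijective (fun z => op z a))
    (htri : ∀ g : X, Function.Bijective (fun z => tri g z))
    (D : ℕ) (hD : 1 ≤ D)
    (g : (d : Fin D) → ((i : Fin D) → i < d → X) → X)
    (f : (d : Fin D) → ((i : Fin D) → i < d → X) → ((i : Fin D) → d < i → X) → X)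
    (F : (Fin D → X) → (Fin D → X))
    (hF1 : ∀ (x : Fin D → X) (d : Fin D), d.val = 0 →
      F x d = op (x d) (f d (fun i _ => F x i) (fun i _ => x i)))
    (hFd : ∀ (x : Fin D → X) (d : Fin D), d.val ≠ 0 →
      F x d = op (tri (g d (fun i _ => F x i)) (x d))
                 (f d (fun i _ => F x i) (fun i _ => x i))) :
    Function.Bijective F := by
  set G := Gaux op tri hop htri D g f with hG
  rw [Function.bijective_iff_has_inverse]
  refine ⟨G, ?_, ?_⟩
  · -- left inverse : G (F x) = x
    intro x
    have main : ∀ d : Fin D, (∀ i, d < i → G (F x) i = x i) → G (F x) d = x d := by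
      intro d h
      have e2 : (fun i (hi : d < i) => Gaux op tri hop htri D g f (F x) i)
          = (fun i (_ : d < i) => x i) := funext fun i => funext fun hi => h i hi
      rw [hG]
      rw [Gaux]
      simp only [e2]
      by_cases h0 : d.val = 0
      · rw [dif_pos h0, hF1 x d h0]
        exact (Equiv.ofBijective _ (hop _)).symm_apply_apply (x d)
      · rw [dif_neg h0, hFd x d h0]
        rw [show (op (tri (g d fun i _ => F x i) (x d)) (f d (fun i _ => F x i) fun i _ => x i))
            = (Equiv.ofBijective (fun z => op z (f d (fun i _ => F x i) fun i _ => x i)) (hop _))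
              (tri (g d fun i _ => F x i) (x d)) from rfl,
          Equiv.symm_apply_apply]
        exact (Equiv.ofBijective _ (htri _)).symm_apply_apply (x d)
    have key : ∀ n : ℕ, ∀ d : Fin D, D - d.val ≤ n → G (F x) d = x d := by
      intro n
      induction n using Nat.strong_induction_on with
      | _ n ih =>
        intro d hd
        refine main d fun i hi => ?_
        have hi' : d.val < i.val := hi
        have hiD := i.isLt
        exact ih (D - i.val) (by omega) i le_rfl
    funext d
    exact key (D - d.val) d le_rfl
  · -- right inverse : F (G y) = y
    intro y
    have main : ∀ d : Fin D, (∀ i, i < d → F (G y) i = y i) → F (G y) d = y d := by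
      intro d h
      have e1 : (fun i (hi : i < d) => F (G y) i) = (fun i (_ : i < d) => y i) :=
        funext fun i => funext fun hi => h i hi
      by_cases h0 : d.val = 0
      · rw [hF1 (G y) d h0, e1]
        have hGd : G y d = (Equiv.ofBijective _
            (hop (f d (fun i _ => y i) (fun i (_ : d < i) => G y i)))).symm (y d) := by
          rw [hG, Gaux, dif_pos h0]
        rw [hGd]
        exact (Equiv.ofBijective _ (hop _)).apply_symm_apply (y d)
      · rw [hFd (G y) d h0, e1]
        have hGd : G y d = (Equiv.ofBijective _ (htri (g d (fun i (_ : i < d) => y i)))).symm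
            ((Equiv.ofBijective _
              (hop (f d (fun i _ => y i) (fun i (_ : d < i) => G y i)))).symm (y d)) := by
          rw [hG, Gaux, dif_neg h0]
        rw [hGd]
        rw [show tri (g d fun i _ => y i) ((Equiv.ofBijective _ (htri (g d fun i (_ : i < d) => y i))).symm _)
            = (Equiv.ofBijective _ (htri (g d fun i (_ : i < d) => y i)))
              ((Equiv.ofBijective _ (htri (g d fun i (_ : i < d) => y i))).symm _) from rfl]
        rw [Equiv.apply_symm_apply]
        exact (Equiv.ofBijective _ (hop _)).apply_symm_apply (y d)
    have key : ∀ n : ℕ, ∀ d : Fin D, d.val ≤ n → F (G y) d = y d := by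
      intro n
      induction n using Nat.strong_induction_on with
      | _ n ih =>
        intro d hd
        exact main d fun i hi => by
          rcases Nat.lt_or_ge 0 n with hn | hn
          · exact ih i.val (by omega) i le_rfl
          · omega
    funext d
    exact key d.val d le_rfl
end

section
/- Under the hypotheses of the general invertible transformation (X with operations ∘, ▷ whose partial maps are bijective with inverses •, ◁; arbitrary functions g_2, …, g_D and f_1, …, f_D; and F : X^D → X^D defined by y_1 = x_1 ∘ f_1(∅, x_{2:D}) and y_d = (g_d(y_{1:d-1}) ▷ x_d) ∘ f_d(y_{1:d-1}, x_{d+1:D}) for 2 ≤ d ≤ D), the inverse of F is given explicitly by the backward recursion: x_D = g_D(y_{1:D-1}) ◁ (y_D • f_D(y_{1:D-1}, ∅)), and for d = D−1 down to 2, x_d = g_d(y_{1:d-1}) ◁ (y_d • f_d(y_{1:d-1}, x_{d+1:D})), and finally x_1 = y_1 • f_1(∅, x_{2:D}). That is, applying this backward recursion to F(x) recovers x for every x ∈ X^D. -/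
/-- **Explicit inverse of the general invertible transformation.**
With `op` (paper's `∘`) invertible in its first argument with inverse `bul` (paper's `•`),
and `tri` (paper's `▷`) invertible in its second argument with inverse `lhd` (paper's `◁`),
if `F` satisfies the forward recursion
`y₁ = x₁ ∘ f₁(∅, x_{2:D})`, `y_d = (g_d(y_{1:d-1}) ▷ x_d) ∘ f_d(y_{1:d-1}, x_{d+1:D})`,
and `G` satisfies the backward recursion
`x_d = g_d(y_{1:d-1}) ◁ (y_d • f_d(y_{1:d-1}, x_{d+1:D}))` for `d ≥ 2` and
`x₁ = y₁ • f₁(∅, x_{2:D})`, then applying `G` to `F x` recovers `x` for every `x`. -/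
theorem general_invertible_transformation_inverse
    {X : Type*} (op tri bul lhd : X → X → X)
    (hbul_left : ∀ (a z : X), bul (op z a) a = z)
    (hbul_right : ∀ (a z : X), op (bul z a) a = z)
    (hlhd_left : ∀ (g z : X), lhd g (tri g z) = z)
    (hlhd_right : ∀ (g z : X), tri g (lhd g z) = z)
    (D : ℕ) (hD : 1 ≤ D)
    (g : (d : Fin D) → ((i : Fin D) → i < d → X) → X)
    (f : (d : Fin D) → ((i : Fin D) → i < d → X) → ((i : Fin D) → d < i → X) → X)
    (F : (Fin D → X) → (Fin D → X))
    (hF1 : ∀ (x : Fin D → X) (d : Fin D), d.val = 0 →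
      F x d = op (x d) (f d (fun i _ => F x i) (fun i _ => x i)))
    (hFd : ∀ (x : Fin D → X) (d : Fin D), d.val ≠ 0 →
      F x d = op (tri (g d (fun i _ => F x i)) (x d))
                 (f d (fun i _ => F x i) (fun i _ => x i)))
    (G : (Fin D → X) → (Fin D → X))
    (hG1 : ∀ (y : Fin D → X) (d : Fin D), d.val = 0 →
      G y d = bul (y d) (f d (fun i _ => y i) (fun i _ => G y i)))
    (hGd : ∀ (y : Fin D → X) (d : Fin D), d.val ≠ 0 →
      G y d = lhd (g d (fun i _ => y i))
                  (bul (y d) (f d (fun i _ => y i) (fun i _ => G y i)))) :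
    ∀ x : Fin D → X, G (F x) = x := by
  intro x
  have key : ∀ n : ℕ, ∀ d : Fin D, D - d.val ≤ n → G (F x) d = x d := by
    intro n
    induction n with
    | zero => intro d h; exact absurd h (by omega)
    | succ n ih =>
      intro d hd
      have hgt : ∀ i : Fin D, d < i → G (F x) i = x i := by
        intro i hi
        have hvi : d.val < i.val := hi
        exact ih i (by omega)
      have hf : f d (fun i _ => F x i) (fun i _ => G (F x) i)
          = f d (fun i _ => F x i) (fun i _ => x i) := by
        congr 1; funext i h; exact hgt i h
      by_cases h0 : d.val = 0
      · rw [hG1 (F x) d h0, hf, hF1 x d h0, hbul_left]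
      · rw [hGd (F x) d h0, hf, hFd x d h0, hbul_left, hlhd_left]
  funext d
  exact key D d (by omega)
end

section
/- Let n be a positive natural number, let D₁, …, Dₙ be positive natural numbers, and for each d ∈ {1, …, n} let t_d be an arbitrary function taking as input the tuple (y₁, …, y_{d−1}, x_{d+1}, …, xₙ) ∈ ℤ^{D₁} × ⋯ × ℤ^{D_{d−1}} × ℤ^{D_{d+1}} × ⋯ × ℤ^{Dₙ} and producing a value in ℤ^{D_d}. Then the n-part integer coupling layer defined recursively by y_d = x_d + t_d(y₁, …, y_{d−1}, x_{d+1}, …, xₙ) for d = 1, …, n is a bijection of ℤ^{D₁} × ⋯ × ℤ^{Dₙ}, with inverse given by the backward recursion x_d = y_d − t_d(y₁, …, y_{d−1}, x_{d+1}, …, xₙ) for d = n down to 1. -/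
/-- The **general `n`-part integer additive coupling layer**: with dimensions
`D 1, …, D n > 0` and arbitrary functions `t d` of the earlier outputs
`y₁, …, y_{d-1}` and the later inputs `x_{d+1}, …, xₙ`, any map `F` satisfying the
forward recursion `y_d = x_d + t_d(y_{1:d-1}, x_{d+1:n})` is a bijection of
`ℤ^{D₁} × ⋯ × ℤ^{Dₙ}`, and any map `G` satisfying the backward recursion
`x_d = y_d − t_d(y_{1:d-1}, x_{d+1:n})` is its two-sided inverse.
The paper's four-part and eight-part coupling layers are the cases `n = 4`, `n = 8`. -/
theorem n_part_integer_coupling_layer_bijective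
    (n : ℕ) (hn : 0 < n) (D : Fin n → ℕ) (hD : ∀ d, 0 < D d)
    (t : (d : Fin n) → ((i : Fin n) → i < d → (Fin (D i) → ℤ)) →
         ((i : Fin n) → d < i → (Fin (D i) → ℤ)) → (Fin (D d) → ℤ))
    (F : ((d : Fin n) → Fin (D d) → ℤ) → ((d : Fin n) → Fin (D d) → ℤ))
    (hF : ∀ (x : (d : Fin n) → Fin (D d) → ℤ) (d : Fin n),
      F x d = x d + t d (fun i _ => F x i) (fun i _ => x i))
    (G : ((d : Fin n) → Fin (D d) → ℤ) → ((d : Fin n) → Fin (D d) → ℤ))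
    (hG : ∀ (y : (d : Fin n) → Fin (D d) → ℤ) (d : Fin n),
      G y d = y d - t d (fun i _ => y i) (fun i _ => G y i)) :
    Function.Bijective F ∧ (∀ x, G (F x) = x) ∧ (∀ y, F (G y) = y) := by
  have hGF : ∀ x, G (F x) = x := by
    intro x
    have key : ∀ k (d : Fin n), n - d.val ≤ k → G (F x) d = x d := by
      intro k
      induction k with
      | zero => intro d hd; exact absurd hd (by have := d.isLt; omega)
      | succ k ih =>
        intro d hd
        have h2 : (fun i (h : d < i) => G (F x) i) = (fun i (_ : d < i) => x i) := by
          funext i h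
          exact ih i (by have := i.isLt; have h' : d.val < i.val := h; omega)
        rw [hG, h2, hF]
        simp
    funext d
    exact key n d (by omega)
  have hFG : ∀ y, F (G y) = y := by
    intro y
    have key : ∀ k (d : Fin n), d.val < k → F (G y) d = y d := by
      intro k
      induction k with
      | zero => intro d hd; omega
      | succ k ih =>
        intro d hd
        have h2 : (fun i (h : i < d) => F (G y) i) = (fun i (_ : i < d) => y i) := by
          funext i h
          exact ih i (by have h' : i.val < d.val := h; omega)
        rw [hF, h2, hG]
        simp
    funext d
    exact key n d d.isLt
  exact ⟨Function.bijective_iff_has_inverse.mpr ⟨G, fun x => hGF x, fun y => hFG y⟩,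
    hGF, hFG⟩
end

section
/- Let p ∈ (0, 1) and μ ∈ ℝ. Define for each y ∈ ℤ the value P(y) = (1 − p)·p^{y−μ} / ((1 + p^{y−μ})(1 + p^{y−μ+1})), where p^s denotes the real power exp(s·log p) for s ∈ ℝ. Then P(y) > 0 for every y ∈ ℤ and the sum over all integers is one: ∑_{y ∈ ℤ} P(y) = 1 (the family is summable and its tsum equals 1). Hence P is the probability mass function of a probability distribution on ℤ with infinite support (the discretized two-parameter logistic distribution). -/
open Filter Topology

/-- The **discretized two-parameter logistic distribution** of Chakraborty–Chakravarty:
for `p ∈ (0, 1)` and `μ ∈ ℝ`, the function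
`P(y) = (1 − p)·p^{y−μ} / ((1 + p^{y−μ})(1 + p^{y−μ+1}))` (real powers, i.e. rpow)
is strictly positive for every `y ∈ ℤ`, the family is summable over `ℤ`, and its
(unconditional) sum equals one; hence `P` is a probability mass function on `ℤ`
with infinite support. -/
theorem discretized_logistic_pmf (p μ : ℝ) (hp : p ∈ Set.Ioo (0 : ℝ) 1) :
    (∀ y : ℤ, 0 < (1 - p) * p ^ ((y : ℝ) - μ) /
      ((1 + p ^ ((y : ℝ) - μ)) * (1 + p ^ ((y : ℝ) - μ + 1)))) ∧
    Summable (fun y : ℤ => (1 - p) * p ^ ((y : ℝ) - μ) /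
      ((1 + p ^ ((y : ℝ) - μ)) * (1 + p ^ ((y : ℝ) - μ + 1)))) ∧
    ∑' y : ℤ, (1 - p) * p ^ ((y : ℝ) - μ) /
      ((1 + p ^ ((y : ℝ) - μ)) * (1 + p ^ ((y : ℝ) - μ + 1))) = 1 := by
  obtain ⟨hp0, hp1⟩ := hp
  set f : ℤ → ℝ := fun y => (1 - p) * p ^ ((y : ℝ) - μ) /
      ((1 + p ^ ((y : ℝ) - μ)) * (1 + p ^ ((y : ℝ) - μ + 1))) with hf
  set g : ℤ → ℝ := fun y => 1 / (1 + p ^ ((y : ℝ) - μ)) with hg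
  have hrpos : ∀ x : ℝ, 0 < p ^ x := fun x => Real.rpow_pos_of_pos hp0 x
  have hdpos : ∀ x : ℝ, 0 < 1 + p ^ x := fun x => by positivity
  have hpos : ∀ y : ℤ, 0 < f y := by
    intro y
    have := hrpos ((y : ℝ) - μ)
    have := hdpos ((y : ℝ) - μ)
    have := hdpos ((y : ℝ) - μ + 1)
    have h1p : 0 < 1 - p := by linarith
    positivity
  -- telescoping identity
  have key : ∀ y : ℤ, f y = g (y + 1) - g y := by
    intro y
    have h1 : ((y + 1 : ℤ) : ℝ) - μ = ((y : ℝ) - μ) + 1 := by push_cast; ring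
    have h2 : p ^ (((y : ℝ) - μ) + 1) = p ^ ((y : ℝ) - μ) * p := by
      rw [Real.rpow_add hp0, Real.rpow_one]
    have hA := (hdpos ((y : ℝ) - μ)).ne'
    have hB := (hdpos (((y : ℝ) - μ) + 1)).ne'
    simp only [hf, hg, h1]
    field_simp
    rw [h2]; ring
  -- limit of p ^ ((n:ℝ) - μ) as n → ∞
  have hlim1 : Tendsto (fun n : ℕ => p ^ ((n : ℝ) - μ)) atTop (𝓝 0) := by
    have : (fun n : ℕ => p ^ ((n : ℝ) - μ)) = fun n : ℕ => p ^ n / p ^ μ := by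
      funext n
      rw [Real.rpow_sub hp0, Real.rpow_natCast]
    rw [this]
    simpa using (tendsto_pow_atTop_nhds_zero_of_lt_one hp0.le hp1).div_const (p ^ μ)
  -- g n → 1 as n → ∞ (n : ℕ)
  have hgl1 : Tendsto (fun n : ℕ => g (n : ℤ)) atTop (𝓝 1) := by
    have : Tendsto (fun n : ℕ => 1 / (1 + p ^ ((n : ℝ) - μ))) atTop (𝓝 (1 / (1 + 0))) := by
      exact (tendsto_const_nhds.div ((tendsto_const_nhds).add hlim1) (by norm_num))
    simpa [hg] using this
  -- g (-n) → 0 as n → ∞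
  have hlim2 : Tendsto (fun n : ℕ => p ^ ((-n : ℝ) - μ)) atTop atTop := by
    have heq : (fun n : ℕ => p ^ ((-n : ℝ) - μ)) = fun n : ℕ => (p⁻¹) ^ n / p ^ μ := by
      funext n
      rw [Real.rpow_sub hp0, Real.rpow_neg hp0.le, Real.rpow_natCast, inv_pow]
    rw [heq]
    exact (tendsto_pow_atTop_atTop_of_one_lt ((one_lt_inv₀ hp0).mpr hp1)).atTop_div_const (hrpos μ)
  have hgl2 : Tendsto (fun n : ℕ => g (-(n : ℤ))) atTop (𝓝 0) := by
    have h := (tendsto_atTop_add_const_left atTop (1 : ℝ) hlim2).inv_tendsto_atTop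
    have : (fun n : ℕ => g (-(n : ℤ))) = fun n : ℕ => (1 + p ^ ((-n : ℝ) - μ))⁻¹ := by
      funext n; simp [hg, one_div]
    rw [this]; exact h
  -- HasSum over nonneg indices
  have h0le : ∀ y : ℤ, 0 ≤ f y := fun y => (hpos y).le
  have hS1 : HasSum (fun n : ℕ => f (n : ℤ)) (1 - g 0) := by
    rw [hasSum_iff_tendsto_nat_of_nonneg (fun n => h0le _)]
    have hps : ∀ n : ℕ, ∑ i ∈ Finset.range n, f (i : ℤ) = g (n : ℤ) - g 0 := by
      intro n
      calc ∑ i ∈ Finset.range n, f (i : ℤ)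
          = ∑ i ∈ Finset.range n, ((fun k : ℕ => g (k : ℤ)) (i + 1)
              - (fun k : ℕ => g (k : ℤ)) i) := by
            refine Finset.sum_congr rfl fun i _ => ?_
            rw [key]; push_cast; ring_nf
        _ = g (n : ℤ) - g 0 := by
            simpa using Finset.sum_range_sub (fun k : ℕ => g (k : ℤ)) n
    simp only [hps]
    simpa using hgl1.sub_const (g 0)
  have hS2 : HasSum (fun n : ℕ => f (-((n : ℤ) + 1))) (g 0) := by
    rw [hasSum_iff_tendsto_nat_of_nonneg (fun n => h0le _)]
    have hps : ∀ n : ℕ, ∑ i ∈ Finset.range n, f (-((i : ℤ) + 1)) = g 0 - g (-(n : ℤ)) := by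
      intro n
      calc ∑ i ∈ Finset.range n, f (-((i : ℤ) + 1))
          = ∑ i ∈ Finset.range n, ((fun k : ℕ => g (-(k : ℤ))) i
              - (fun k : ℕ => g (-(k : ℤ))) (i + 1)) := by
            refine Finset.sum_congr rfl fun i _ => ?_
            rw [key]; push_cast; ring_nf
        _ = g 0 - g (-(n : ℤ)) := by
            simpa using Finset.sum_range_sub' (fun k : ℕ => g (-(k : ℤ))) n
    simp only [hps]
    simpa using (tendsto_const_nhds (x := g 0)).sub hgl2
  have hS : HasSum f 1 := by
    have := hS1.of_nat_of_neg_add_one hS2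
    simpa using this
  exact ⟨hpos, hS.summable, hS.tsum_eq⟩
end
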